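/- If p∈A^0 is irreducible in A^0, then p∈A_+^0 or p∈A_−^0, and p has even length. -/

import Mathlib

/-- The involution on words: reverse and negate each entry. -/
def starWord (l : List ℤ) : List ℤ := (l.map (fun x => -x)).reverse

/-- A reduced word: a nonempty finite sequence of nonzero integers whose entries
alternate in sign and whose interior entries have absolute value at least 2. -/
def Reduced (l : List ℤ) : Prop :=
  l ≠ [] ∧
  (∀ i, i < l.length → l.getD i 0 ≠ 0) ∧
  (∀ i, i + 1 < l.length → (0 < l.getD i 0 ↔ l.getD (i + 1) 0 < 0)) ∧
  (∀ i, 0 < i → i + 1 < l.length → 2 ≤ |l.getD i 0|)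

/-- Auxiliary multiplication: the first argument is the *reversed* left word; the
junction is reduced (same-sign adjacent entries added, an interior entry `±1`
removed by summing its two neighbours with it). -/
def mulAux : List ℤ → List ℤ → List ℤ
  | [], R => R
  | x :: xs, [] => (x :: xs).reverse
  | x :: xs, y :: ys =>
    if 0 < x * y then
      xs.reverse ++ (x + y) :: ys
    else if x + y = 0 then
      if xs = [] ∧ ys = [] then [x, y]
      else if xs = [] then ys
      else if ys = [] then xs.reverse
      else mulAux xs ys
    else if (x = 1 ∨ x = -1) ∧ xs ≠ [] then
      mulAux xs ((x + y) :: ys)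
    else if (y = 1 ∨ y = -1) ∧ ys ≠ [] then
      mulAux ((x + y) :: xs) ys
    else
      xs.reverse ++ x :: y :: ys
termination_by L R => L.length + R.length
decreasing_by all_goals simp +arith +decide

/-- Multiplication in the `*`-semigroup `A`: concatenation followed by reduction. -/
def mulWords (v w : List ℤ) : List ℤ := mulAux v.reverse w

/-- `τ : A → ℤ`, the sum of the entries, is `List.sum`; `σ_r(n) = n_0 + ⋯ + n_r`
(equal to `τ(n)` when `r` exceeds the top index). -/
def sigmaW (l : List ℤ) (r : ℕ) : ℤ := (l.take (r + 1)).sum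

/-- `A⁰ = τ⁻¹(0)`, the `*`-subsemigroup of words with entry sum zero. -/
def A0 : Set (List ℤ) := {l | Reduced l ∧ l.sum = 0}

/-- `p` is irreducible in a subsemigroup `S` of `A`: whenever `p = m * n` with
`m, n ∈ S` then `p = m` or `p = n`. -/
def IrreducibleIn (S : Set (List ℤ)) (p : List ℤ) : Prop :=
  p ∈ S ∧ ∀ m ∈ S, ∀ n ∈ S, p = mulWords m n → p = m ∨ p = n

/-- `A₊`: reduced words `(n_0, …, n_k)` with `k ≥ 1`, `n_0 < 0` and `n_k > 0`. -/
def Aplus : Set (List ℤ) :=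
  {l | Reduced l ∧ 2 ≤ l.length ∧ l.getD 0 0 < 0 ∧ 0 < l.getD (l.length - 1) 0}

/-- `A₋`: reduced words `(n_0, …, n_k)` with `k ≥ 1`, `n_0 > 0` and `n_k < 0`. -/
def Aminus : Set (List ℤ) :=
  {l | Reduced l ∧ 2 ≤ l.length ∧ 0 < l.getD 0 0 ∧ l.getD (l.length - 1) 0 < 0}

/-!
Signs alternate along a reduced word, so its length is even exactly when its two end entries have
opposite signs; for a word of `A⁰` this means lying in `A₊` or `A₋`. It remains to split a word
`(n_0, …, n_k)` of `A⁰` of odd length into two shorter factors in `A⁰`. Call `r` good when the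
partial sum `σ_r` is nonzero with the sign of `n_r`. Index `0` is good, `k - 1` is good since
`σ_{k-1} = -n_k`, and a bad index is followed by a good one; as `k - 1` is odd, some `j` and `j + 1`
are both good. Then `-σ_j` and `σ_{j+1}` have the same sign and sum to `n_{j+1}`, so
`(n_0, …, n_j, -σ_j) * (σ_{j+1}, n_{j+2}, …, n_k)` is the required factorization.
-/

theorem sigmaW_zero {l : List ℤ} (h : 0 < l.length) : sigmaW l 0 = l.getD 0 0 := by
  rw [sigmaW, List.sum_take_succ l 0 h, List.getD_eq_getElem _ _ h]
  simp

theorem sigmaW_succ {l : List ℤ} {r : ℕ} (h : r + 1 < l.length) :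
    sigmaW l (r + 1) = sigmaW l r + l.getD (r + 1) 0 := by
  rw [sigmaW, sigmaW, List.sum_take_succ l (r + 1) h, List.getD_eq_getElem _ _ h]

theorem sigmaW_of_length_le {l : List ℤ} {r : ℕ} (h : l.length ≤ r + 1) : sigmaW l r = l.sum := by
  rw [sigmaW, List.take_of_length_le h]

def PartialSumSameSign (l : List ℤ) (r : ℕ) : Prop :=
  (0 < sigmaW l r ∧ 0 < l.getD r 0) ∨ (sigmaW l r < 0 ∧ l.getD r 0 < 0)

theorem mulWords_append_singleton_cons (xs ys : List ℤ) {c b : ℤ} (h : 0 < c * b) :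
    mulWords (xs ++ [c]) (b :: ys) = xs ++ (c + b) :: ys := by
  rw [mulWords, List.reverse_append, List.reverse_singleton, List.singleton_append, mulAux,
    if_pos h, List.reverse_reverse]

namespace Reduced

variable {l : List ℤ}

theorem pos_getD_iff (hl : Reduced l) :
    ∀ i < l.length, (0 < l.getD i 0 ↔ (Even i ↔ 0 < l.getD 0 0)) := by
  intro i
  induction i with
  | zero => simp
  | succ i ih =>
    intro hi
    have hflip : 0 < l.getD (i + 1) 0 ↔ ¬ 0 < l.getD i 0 := by
      have := hl.2.2.1 i hi
      have := hl.2.1 (i + 1) hi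
      omega
    rw [Nat.even_add_one, hflip, ih (by omega)]
    tauto

theorem even_length_iff (hl : Reduced l) :
    Even l.length ↔ (0 < l.getD 0 0 ↔ l.getD (l.length - 1) 0 < 0) := by
  have hpos : 0 < l.length := List.length_pos_iff.mpr hl.1
  have hlast := hl.pos_getD_iff (l.length - 1) (by omega)
  have hneg : l.getD (l.length - 1) 0 < 0 ↔ ¬ 0 < l.getD (l.length - 1) 0 := by
    have := hl.2.1 (l.length - 1) (by omega)
    omega
  have hpar : Even l.length ↔ ¬ Even (l.length - 1) := by
    rw [← Nat.even_add_one, Nat.sub_add_cancel hpos]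
  rw [hpar, hneg, hlast]
  tauto

theorem mem_Aplus_or_Aminus (hl : Reduced l) (heven : Even l.length) : l ∈ Aplus ∨ l ∈ Aminus := by
  have hlen : 2 ≤ l.length := by
    have := List.length_pos_iff.mpr hl.1
    rcases heven with ⟨k, hk⟩
    omega
  have hsign := hl.even_length_iff.mp heven
  have := hl.2.1 0 (by omega)
  have := hl.2.1 (l.length - 1) (by omega)
  by_cases hfirst : 0 < l.getD 0 0
  · exact Or.inr ⟨hl, hlen, hfirst, hsign.mp hfirst⟩
  · exact Or.inl ⟨hl, hlen, by omega, by rw [hsign] at hfirst; omega⟩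

theorem partialSumSameSign_zero (hl : Reduced l) : PartialSumSameSign l 0 := by
  have hpos : 0 < l.length := List.length_pos_iff.mpr hl.1
  have := hl.2.1 0 hpos
  unfold PartialSumSameSign
  rw [sigmaW_zero hpos]
  omega

theorem partialSumSameSign_succ (hl : Reduced l) {r : ℕ} (hr : r + 1 < l.length)
    (h : ¬ PartialSumSameSign l r) : PartialSumSameSign l (r + 1) := by
  have := sigmaW_succ hr
  have := hl.2.2.1 r hr
  have := hl.2.1 r (by omega)
  have := hl.2.1 (r + 1) hr
  unfold PartialSumSameSign at h ⊢
  omega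

theorem partialSumSameSign_penultimate (hl : Reduced l) (hsum : l.sum = 0)
    (hlen : 2 ≤ l.length) : PartialSumSameSign l (l.length - 2) := by
  have hsucc := sigmaW_succ (l := l) (r := l.length - 2) (by omega)
  rw [sigmaW_of_length_le (by omega), hsum, show l.length - 2 + 1 = l.length - 1 by omega] at hsucc
  have := hl.2.2.1 (l.length - 2) (by omega)
  have := hl.2.1 (l.length - 2) (by omega)
  have := hl.2.1 (l.length - 1) (by omega)
  rw [show l.length - 2 + 1 = l.length - 1 by omega] at *
  unfold PartialSumSameSign
  omega

theorem exists_partialSumSameSign_pair (hl : Reduced l) (hsum : l.sum = 0) (hodd : Odd l.length) :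
    ∃ j, j + 3 ≤ l.length ∧ PartialSumSameSign l j ∧ PartialSumSameSign l (j + 1) := by
  have hlen : 3 ≤ l.length := by
    obtain ⟨k, hk⟩ := hodd
    rcases k with _ | k
    · obtain ⟨x, rfl⟩ := List.length_eq_one_iff.mp hk
      exact absurd (by simpa using hsum) (by simpa using hl.2.1 0 (by simp))
    · omega
  by_contra! hno
  have hparity : ∀ r, r + 1 < l.length → (PartialSumSameSign l r ↔ Even r) := by
    intro r
    induction r with
    | zero => exact fun _ => iff_of_true hl.partialSumSameSign_zero Even.zero
    | succ r ih =>
      intro hr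
      rw [Nat.even_add_one, ← ih (by omega)]
      exact ⟨fun h hr' => hno r (by omega) hr' h, hl.partialSumSameSign_succ (by omega)⟩
  have := (hparity (l.length - 2) (by omega)).mp (hl.partialSumSameSign_penultimate hsum (by omega))
  rw [Nat.even_sub (by omega)] at this
  exact Nat.not_even_iff_odd.mpr hodd (this.mpr even_two)

theorem take_append_singleton (hl : Reduced l) {i : ℕ} (hi : i + 1 < l.length) {c : ℤ}
    (hc : c ≠ 0) (hsign : 0 < l.getD i 0 ↔ c < 0) : Reduced (l.take (i + 1) ++ [c]) := by
  have hlen : (l.take (i + 1) ++ [c]).length = i + 2 := by simp; omega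
  have hprefix : ∀ k ≤ i, (l.take (i + 1) ++ [c]).getD k 0 = l.getD k 0 := by
    intro k hk
    rw [List.getD_append _ _ _ _ (by simp; omega)]
    simp [List.getD_eq_getElem?_getD, show k < i + 1 by omega]
  have hlast : (l.take (i + 1) ++ [c]).getD (i + 1) 0 = c := by
    rw [List.getD_append_right _ _ _ _ (by simp)]
    simp [Nat.min_eq_left hi.le]
  refine ⟨by simp, fun k hk => ?_, fun k hk => ?_, fun k hk0 hk => ?_⟩ <;> rw [hlen] at hk
  · rcases Nat.lt_or_ge k (i + 1) with hk' | hk'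
    · rw [hprefix k (by omega)]
      exact hl.2.1 k (by omega)
    · rwa [show k = i + 1 by omega, hlast]
  · rcases Nat.lt_or_ge (k + 1) (i + 1) with hk' | hk'
    · rw [hprefix k (by omega), hprefix (k + 1) (by omega)]
      exact hl.2.2.1 k (by omega)
    · rwa [show k = i by omega, hprefix i le_rfl, hlast]
  · rw [hprefix k (by omega)]
    exact hl.2.2.2 k hk0 (by omega)

theorem cons_drop (hl : Reduced l) {i : ℕ} (hi0 : 0 < i) (hi : i < l.length) {b : ℤ}
    (hb : b ≠ 0) (hsign : 0 < b ↔ l.getD i 0 < 0) : Reduced (b :: l.drop i) := by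
  have hlen : (b :: l.drop i).length = l.length - i + 1 := by simp
  have hsuffix : ∀ k, (b :: l.drop i).getD (k + 1) 0 = l.getD (i + k) 0 := by
    intro k
    simp [List.getD_eq_getElem?_getD]
  refine ⟨by simp, fun k hk => ?_, fun k hk => ?_, fun k hk0 hk => ?_⟩ <;> rw [hlen] at hk
  · rcases k with _ | k
    · exact hb
    · rw [hsuffix]
      exact hl.2.1 _ (by omega)
  · rcases k with _ | k
    · rwa [List.getD_cons_zero, hsuffix, Nat.add_zero]
    · rw [hsuffix, hsuffix, ← Nat.add_assoc]
      exact hl.2.2.1 _ (by omega)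
  · obtain ⟨k, rfl⟩ := Nat.exists_eq_succ_of_ne_zero hk0.ne'
    rw [hsuffix]
    exact hl.2.2.2 _ (by omega) (by omega)

theorem exists_mul_eq_of_odd_length (hl : Reduced l) (hsum : l.sum = 0)
    (hodd : Odd l.length) : ∃ m ∈ A0, ∃ n ∈ A0,
      l = mulWords m n ∧ m.length < l.length ∧ n.length < l.length := by
  obtain ⟨j, hj, hgood, hgood'⟩ := hl.exists_partialSumSameSign_pair hsum hodd
  set c := -sigmaW l j with hc
  set b := sigmaW l (j + 1) with hb
  have hstep : b = -c + l.getD (j + 1) 0 := by rw [hb, sigmaW_succ (by omega), hc, neg_neg]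
  have := hl.2.1 j (by omega)
  have := hl.2.1 (j + 1) (by omega)
  have := hl.2.1 (j + 2) (by omega)
  have := hl.2.2.1 j (by omega)
  have : 0 < l.getD (j + 1) 0 ↔ l.getD (j + 2) 0 < 0 := hl.2.2.1 (j + 1) (by omega)
  unfold PartialSumSameSign at hgood hgood'
  have hm : Reduced (l.take (j + 1) ++ [c]) :=
    hl.take_append_singleton (by omega) (by omega) (by omega)
  have hn : Reduced (b :: l.drop (j + 2)) :=
    hl.cons_drop (by omega) (by omega) (by omega) (by omega)
  have hcb : 0 < c * b := mul_pos_iff.mpr (by omega)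
  refine ⟨_, ⟨hm, ?_⟩, _, ⟨hn, ?_⟩, ?_, by simp; omega, by simp; omega⟩
  · simp [hc, sigmaW]
  · rw [List.sum_cons, hb, sigmaW, List.sum_take_add_sum_drop, hsum]
  · rw [mulWords_append_singleton_cons _ _ hcb, show c + b = l[j + 1] by
      rw [← List.getD_eq_getElem _ 0]; omega, ← List.drop_eq_getElem_cons, List.take_append_drop]

end Reduced

theorem even_length_of_irreducibleIn_A0 {p : List ℤ} (hp : IrreducibleIn A0 p) :
    Even p.length := by
  by_contra hodd
  obtain ⟨⟨hred, hsum⟩, hirr⟩ := hp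
  obtain ⟨m, hm, n, hn, hmul, hmlen, hnlen⟩ :=
    hred.exists_mul_eq_of_odd_length hsum (Nat.not_even_iff_odd.mp hodd)
  rcases hirr m hm n hn hmul with rfl | rfl <;> omega

/-- If `p ∈ A⁰` is irreducible in `A⁰`, then `p ∈ A₊⁰` or `p ∈ A₋⁰`, and `p` has
even length. -/
theorem irreducible_mem_Aplus0_or_Aminus0 (p : List ℤ) (hp : IrreducibleIn A0 p) :
    (p ∈ A0 ∩ Aplus ∨ p ∈ A0 ∩ Aminus) ∧ Even p.length := by
  have heven := even_length_of_irreducibleIn_A0 hp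
  refine ⟨?_, heven⟩
  rcases hp.1.1.mem_Aplus_or_Aminus heven with h | h
  exacts [Or.inl ⟨hp.1, h⟩, Or.inr ⟨hp.1, h⟩]
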